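/- Every δ-clean ring is δ-reversible; that is, if every element x of a ring R can be written as x = e + d with e² = e and d ∈ δ(R), then for all a, b ∈ R, ab = 0 implies ba ∈ δ(R). -/

import Mathlib

/-!
Write `ba = e + d` with `e` idempotent and `d ∈ δ(R)`; since `(ba)² = b(ab)a = 0`, expanding gives
`e + ed = -(de + d²)`, which lies in every right ideal containing `d`. Let `I` be an essential
maximal right ideal and suppose `e ∉ I`. Then `N = {x | ex ∈ I}` is again an essential maximal
right ideal, so `d ∈ N`, i.e. `ed ∈ I`, and hence `e = (e + ed) - ed ∈ I`, a contradiction.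
Thus `e ∈ I` and `ba = e + d ∈ I`.
-/

/-- A right ideal `I` of `R` (a submodule of `R` as a right `R`-module, i.e. an
`Rᵐᵒᵖ`-submodule) is essential if every right ideal meeting it trivially is trivial. -/
def IsEssentialRightIdeal (R : Type*) [Ring R] (I : Submodule Rᵐᵒᵖ R) : Prop :=
  ∀ K : Submodule Rᵐᵒᵖ R, K ⊓ I = ⊥ → K = ⊥

/-- The Zhou radical `δ(R)`: the intersection of all essential maximal right ideals of `R`
(the whole ring if there are no essential maximal right ideals). -/
def zhouRadical (R : Type*) [Ring R] : Set R :=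
  ⋂₀ { S : Set R | ∃ I : Submodule Rᵐᵒᵖ R, IsCoatom I ∧ IsEssentialRightIdeal R I ∧ S = ↑I }

/-- A ring `R` is `δ`-reversible if `a * b = 0` implies `b * a ∈ δ(R)`. -/
def IsDeltaReversible (R : Type*) [Ring R] : Prop :=
  ∀ a b : R, a * b = 0 → b * a ∈ zhouRadical R

namespace Submodule

theorem eq_bot_of_inf_comap_eq_bot {S M N : Type*} [Semiring S] [AddCommMonoid M] [Module S M]
    [AddCommMonoid N] [Module S N] (f : M →ₗ[S] N) {I : Submodule S N}
    (hI : ∀ L : Submodule S N, L ⊓ I = ⊥ → L = ⊥) {K : Submodule S M}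
    (hK : K ⊓ I.comap f = ⊥) : K = ⊥ := by
  have hmap : K.map f ⊓ I = ⊥ := by
    refine eq_bot_iff.2 ?_
    rintro _ ⟨⟨k, hk, rfl⟩, hkI⟩
    have hk0 : k ∈ K ⊓ I.comap f := ⟨hk, hkI⟩
    rw [hK, mem_bot] at hk0
    simp [hk0]
  have hker : K ≤ I.comap f := fun k hk ↦ by
    have hfk : f k ∈ K.map f := mem_map_of_mem hk
    rw [hI _ hmap, mem_bot] at hfk
    simp [hfk]
  rwa [inf_eq_left.2 hker] at hK

theorem isCoatom_comap_of_apply_notMem {S M N : Type*} [Ring S] [AddCommGroup M]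
    [Module S M] [AddCommGroup N] [Module S N] (f : M →ₗ[S] N) {I : Submodule S N}
    (hI : IsCoatom I) {x : M} (hx : f x ∉ I) : IsCoatom (I.comap f) :=
  (isCoatom_comap_or_eq_top f hI).resolve_right fun htop ↦ hx (htop ▸ mem_top : x ∈ I.comap f)

end Submodule

section ZhouRadical

variable {R : Type*} [Ring R]

theorem mem_zhouRadical_iff {x : R} :
    x ∈ zhouRadical R ↔
      ∀ I : Submodule Rᵐᵒᵖ R, IsCoatom I → IsEssentialRightIdeal R I → x ∈ I := by
  simp only [zhouRadical, Set.mem_sInter, Set.mem_ofPred_eq]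
  exact ⟨fun h I hI hess ↦ h I ⟨I, hI, hess, rfl⟩, fun h _ ⟨I, hI, hess, hS⟩ ↦ hS ▸ h I hI hess⟩

theorem IsIdempotentElem.mem_of_add_mul_self_eq_zero {e d : R} (he : IsIdempotentElem e)
    (hd : d ∈ zhouRadical R) (hsq : (e + d) * (e + d) = 0) {I : Submodule Rᵐᵒᵖ R}
    (hI : IsCoatom I) (hess : IsEssentialRightIdeal R I) : e ∈ I := by
  by_contra heI
  let f := LinearMap.mulLeft Rᵐᵒᵖ e
  have hdN : d ∈ I.comap f :=
    mem_zhouRadical_iff.1 hd _ (Submodule.isCoatom_comap_of_apply_notMem f hI (x := 1)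
      (by simpa [f] using heI)) fun _ ↦ Submodule.eq_bot_of_inf_comap_eq_bot f hess
  have hedI : e * d ∈ I := hdN
  have hdI : d ∈ I := mem_zhouRadical_iff.1 hd I hI hess
  have hexpand : e + e * d = -(d * e + d * d) := by
    linear_combination (norm := noncomm_ring) hsq - he.eq
  have hsum : e + e * d ∈ I := by
    rw [hexpand]
    exact I.neg_mem (I.add_mem (I.smul_mem (.op e) hdI) (I.smul_mem (.op d) hdI))
  exact heI (by simpa using I.sub_mem hsum hedI)

end ZhouRadical

/-- Every δ-clean ring is δ-reversible. -/
theorem deltaReversible_of_deltaClean (R : Type*) [Ring R]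
    (h : ∀ x : R, ∃ e d : R, e * e = e ∧ d ∈ zhouRadical R ∧ x = e + d) :
    IsDeltaReversible R := by
  intro a b hab
  obtain ⟨e, d, he, hd, hba⟩ := h (b * a)
  have hsq : (b * a) * (b * a) = 0 := by
    rw [mul_assoc, ← mul_assoc a, hab, zero_mul, mul_zero]
  rw [hba] at hsq ⊢
  refine mem_zhouRadical_iff.2 fun I hI hess ↦ I.add_mem ?_ (mem_zhouRadical_iff.1 hd I hI hess)
  exact IsIdempotentElem.mem_of_add_mul_self_eq_zero he hd hsq hI hess
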